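/- arXiv:1903.00736 — 7 statements merged into one kernel-verified Lean document; each statement's English description precedes it below -/
import Mathlib

section
/- Let E ⊆ ℝ. If the coarse Minkowski dimension of E is strictly positive, then there exist n ∈ ℕ and a linear map T : ℝⁿ → ℝ such that T(Eⁿ) is dense in ℝ. -/
/-!
Fix `ε` with `dimCM E > ε > 0` and `n` with `n ε ≥ 2`. For arbitrarily large `r`, the set
`E ∩ B(0, r)` contains a set `P` of at least `r ^ ε` points with distinct integer parts, so `Pⁿ`
has at least `r²` elements. For a fixed coefficient vector `a₀`, the numbers `⌊a₀ ⬝ x⌋`, `x ∈ Pⁿ`,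
take only `O(r)` values, so one fibre is too large to sit in a box of side `R` around any of its
points: this gives `x, y ∈ Eⁿ` with `|a₀ ⬝ (x - y)| < 1` and `‖x - y‖ ≥ R`. Moving `a₀` along
`x - y` by at most `(1 + |u|) / R` then makes `a ⬝ (x - y) = u` exactly. Hence for every `u` the
coefficient vectors `a` with `u ∈ a ⬝ (Eⁿ - Eⁿ)` are dense, and the Baire category theorem yields
one `a` for which `a ⬝ (Eⁿ - Eⁿ)` is dense; take `T (x, y) = a ⬝ (x - y)` on `ℝⁿ × ℝⁿ = ℝ²ⁿ`.
-/

open Filter Metric Set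

/-- `coverNum δ X` is the minimum number of open balls of radius `δ` needed to cover `X`
(equal to `0` if no finite cover exists, by convention of `sInf` on `ℕ`). -/
noncomputable def coverNum {α : Type*} [PseudoMetricSpace α] (δ : ℝ) (X : Set α) : ℕ :=
  sInf {k : ℕ | ∃ S : Finset α, S.card = k ∧ X ⊆ ⋃ p ∈ S, Metric.ball p δ}

/-- The coarse Minkowski dimension of `Z`:
`limsup_{r → ∞} log M(1, B(0,r) ∩ Z) / log r`. -/
noncomputable def dimCM {α : Type*} [SeminormedAddGroup α] (Z : Set α) : ℝ :=
  limsup (fun r : ℝ =>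
    Real.log (coverNum 1 (Metric.ball (0 : α) r ∩ Z) : ℝ) / Real.log r) atTop

lemma coverNum_le_card {α : Type*} [PseudoMetricSpace α] {δ : ℝ} {X : Set α} {S : Finset α}
    (hS : X ⊆ ⋃ p ∈ S, ball p δ) : coverNum δ X ≤ S.card :=
  Nat.sInf_le ⟨S, rfl, hS⟩

lemma exists_frequently_rpow_le_coverNum {E : Set ℝ} (h : 0 < dimCM E) :
    ∃ ε : ℝ, 0 < ε ∧ ∃ᶠ r in atTop, r ^ ε ≤ coverNum 1 (ball (0 : ℝ) r ∩ E) := by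
  refine ⟨dimCM E / 2, by positivity, ?_⟩
  have hbdd : IsCoboundedUnder (· ≤ ·) atTop fun r : ℝ =>
      Real.log (coverNum 1 (ball (0 : ℝ) r ∩ E) : ℝ) / Real.log r :=
    isCoboundedUnder_le_of_eventually_le atTop <| (eventually_ge_atTop 1).mono fun r hr =>
      div_nonneg (Real.log_natCast_nonneg _) (Real.log_nonneg hr)
  refine ((frequently_lt_of_lt_limsup hbdd (half_lt_self h)).and_eventually
    (eventually_gt_atTop 1)).mono fun r ⟨hlt, hr⟩ => ?_
  have hlog : 0 < Real.log r := Real.log_pos hr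
  have hεlog : dimCM E / 2 * Real.log r < Real.log (coverNum 1 (ball (0 : ℝ) r ∩ E)) :=
    (lt_div_iff₀ hlog).1 hlt
  have hpos : (0 : ℝ) < coverNum 1 (ball (0 : ℝ) r ∩ E) := by
    by_contra! h0
    rw [le_antisymm h0 (Nat.cast_nonneg _), Real.log_zero] at hεlog
    nlinarith
  rw [Real.rpow_def_of_pos (by linarith), mul_comm]
  exact ((Real.lt_log_iff_exp_lt hpos).1 hεlog).le

lemma exists_floor_injOn_coverNum_le {X : Set ℝ} (hX : Bornology.IsBounded X) :
    ∃ P : Finset ℝ, ↑P ⊆ X ∧ InjOn Int.floor (P : Set ℝ) ∧ coverNum 1 X ≤ P.card := by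
  obtain ⟨u, huX, hbij⟩ := exists_subset_bijOn X Int.floor
  have hfin : u.Finite := by
    refine Finite.of_finite_image ?_ hbij.injOn
    rw [hbij.image_eq]
    refine (finite_Icc ⌊sInf X⌋ ⌊sSup X⌋).subset ?_
    rintro _ ⟨x, hx, rfl⟩
    exact ⟨Int.floor_le_floor (hX.subset_Icc_sInf_sSup hx).1,
      Int.floor_le_floor (hX.subset_Icc_sInf_sSup hx).2⟩
  refine ⟨hfin.toFinset, by simpa using huX, by simpa using hbij.injOn, ?_⟩
  refine (coverNum_le_card (S := hfin.toFinset.image fun p => (⌊p⌋ : ℝ) + 1 / 2) ?_).trans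
    Finset.card_image_le
  intro x hx
  obtain ⟨p, hpu, hpx⟩ := hbij.surjOn (mem_image_of_mem _ hx)
  simp only [Finset.mem_image, Finite.mem_toFinset, iUnion_exists, biUnion_and',
    iUnion_iUnion_eq_right, mem_iUnion]
  refine ⟨p, hpu, ?_⟩
  rw [hpx, mem_ball, Real.dist_eq, abs_lt]
  constructor <;> linarith [Int.floor_le x, Int.lt_floor_add_one x]

lemma card_filter_abs_sub_lt_le {P : Finset ℝ} (hP : InjOn Int.floor (P : Set ℝ)) (c : ℝ)
    (R : ℕ) : (P.filter fun p => |p - c| < R).card ≤ 2 * R + 1 := by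
  calc (P.filter fun p => |p - c| < R).card
      ≤ (Finset.Icc (⌊c⌋ - R) (⌊c⌋ + R)).card := by
        refine Finset.card_le_card_of_injOn Int.floor (fun p hp => ?_)
          (hP.mono (Finset.coe_subset.2 (Finset.filter_subset _ _)))
        obtain ⟨hlo, hhi⟩ := abs_lt.1 (Finset.mem_filter.1 hp).2
        rw [Finset.coe_Icc, mem_Icc, ← Int.floor_sub_natCast, ← Int.floor_add_natCast]
        exact ⟨Int.floor_le_floor (by linarith), Int.floor_le_floor (by linarith)⟩
    _ = 2 * R + 1 := by rw [Int.card_Icc]; omega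

lemma exists_apply_sub_ge_of_card_lt {P : Finset ℝ} (hP : InjOn Int.floor (P : Set ℝ))
    {n R : ℕ} {F : Finset (Fin n → ℝ)} (hF : F ⊆ Fintype.piFinset fun _ => P)
    (hcard : (2 * R + 1) ^ n < F.card) : ∃ x ∈ F, ∃ y ∈ F, ∃ i, R ≤ |x i - y i| := by
  by_contra! hnear
  obtain ⟨y, hy⟩ := Finset.card_pos.1 (Nat.zero_lt_of_lt hcard)
  have hsub : F ⊆ Fintype.piFinset fun i => P.filter fun p => |p - y i| < R := fun x hx =>
    Fintype.mem_piFinset.2 fun i =>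
      Finset.mem_filter.2 ⟨Fintype.mem_piFinset.1 (hF hx) i, hnear x hx y hy i⟩
  have hFcard : F.card ≤ (2 * R + 1) ^ n := calc
    F.card ≤ ∏ i, (P.filter fun p => |p - y i| < R).card :=
      (Finset.card_le_card hsub).trans_eq (Fintype.card_piFinset _)
    _ ≤ (2 * R + 1) ^ n := by
      simpa using Finset.prod_le_pow_card Finset.univ _ _ fun i _ =>
        card_filter_abs_sub_lt_le hP (y i) R
  omega

lemma exists_abs_sub_lt_one_of_card_lt {P : Finset ℝ} (hP : InjOn Int.floor (P : Set ℝ))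
    {n R m : ℕ} (g : (Fin n → ℝ) → ℝ) (hg : ∀ x ∈ Fintype.piFinset fun _ => P, |g x| ≤ m)
    (hcard : (2 * m + 1) * (2 * R + 1) ^ n < P.card ^ n) :
    ∃ x ∈ Fintype.piFinset (fun _ => P), ∃ y ∈ Fintype.piFinset (fun _ => P),
      |g x - g y| < 1 ∧ ∃ i, R ≤ |x i - y i| := by
  have hmaps : ∀ x ∈ Fintype.piFinset fun _ => P, ⌊g x⌋ ∈ Finset.Icc (-(m : ℤ)) m := by
    intro x hx
    obtain ⟨hlo, hhi⟩ := abs_le.1 (hg x hx)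
    exact Finset.mem_Icc.2 ⟨Int.le_floor.2 (by simpa using hlo),
      Int.floor_le_iff.2 (by simpa using hhi.trans_lt (lt_add_one _))⟩
  obtain ⟨k, -, hk⟩ := Finset.exists_lt_card_fiber_of_mul_lt_card_of_maps_to hmaps
    (by rw [Int.card_Icc, Fintype.card_piFinset_const]; convert hcard using 2; omega)
  obtain ⟨x, hx, y, hy, hfar⟩ := exists_apply_sub_ge_of_card_lt hP (Finset.filter_subset _ _) hk
  rw [Finset.mem_filter] at hx hy
  exact ⟨x, hx.1, y, hy.1, Int.abs_sub_lt_one_of_floor_eq_floor (hx.2.trans hy.2.symm), hfar⟩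

lemma exists_abs_sum_lt_one_of_frequently {E : Set ℝ} {ε : ℝ}
    (hfreq : ∃ᶠ r in atTop, r ^ ε ≤ coverNum 1 (ball (0 : ℝ) r ∩ E)) {n : ℕ} (hn : 2 ≤ n * ε)
    (a : Fin n → ℝ) (R : ℕ) :
    ∃ x y : Fin n → E, |∑ i, a i * (x i - y i)| < 1 ∧ ∃ i, (R : ℝ) ≤ |(x i : ℝ) - y i| := by
  set A := ∑ i, |a i|
  set C : ℝ := (2 * A + 3) * (2 * R + 1) ^ n
  obtain ⟨r, hrM, hrC, hr1⟩ :=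
    (hfreq.and_eventually ((eventually_gt_atTop C).and (eventually_ge_atTop 1))).exists
  obtain ⟨P, hPX, hP, hcover⟩ :=
    exists_floor_injOn_coverNum_le (X := ball 0 r ∩ E) (isBounded_ball.subset inter_subset_left)
  have hPr : ∀ p ∈ P, |p| < r := fun p hp => by
    simpa using (hPX hp).1
  have hsum : ∀ x ∈ Fintype.piFinset fun _ => P, |∑ i, a i * x i| ≤ ⌈A * r⌉₊ := by
    intro x hx
    calc |∑ i, a i * x i| ≤ ∑ i, |a i| * r := by
          refine (Finset.abs_sum_le_sum_abs _ _).trans (Finset.sum_le_sum fun i _ => ?_)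
          rw [abs_mul]
          exact mul_le_mul_of_nonneg_left (hPr _ (Fintype.mem_piFinset.1 hx i)).le (abs_nonneg _)
      _ = A * r := by rw [Finset.sum_mul]
      _ ≤ ⌈A * r⌉₊ := Nat.le_ceil _
  have hA : 0 ≤ A := Finset.sum_nonneg fun i _ => abs_nonneg _
  have hcard : (2 * ⌈A * r⌉₊ + 1) * (2 * R + 1) ^ n < P.card ^ n := by
    have hceil : (⌈A * r⌉₊ : ℝ) < A * r + 1 := Nat.ceil_lt_add_one (by positivity)
    suffices ((2 * ⌈A * r⌉₊ + 1) * (2 * R + 1) ^ n : ℝ) < P.card ^ n by exact_mod_cast this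
    calc ((2 * ⌈A * r⌉₊ + 1) * (2 * R + 1) ^ n : ℝ) ≤ (2 * A + 3) * r * (2 * R + 1) ^ n := by
          gcongr; nlinarith
      _ = C * r := by ring
      _ < r ^ (2 : ℝ) := by rw [Real.rpow_two, sq]; gcongr
      _ ≤ r ^ (ε * n) := Real.rpow_le_rpow_of_exponent_le hr1 (by linarith)
      _ = (r ^ ε) ^ n := Real.rpow_mul_natCast (by linarith) _ _
      _ ≤ P.card ^ n := by gcongr; exact hrM.trans (by exact_mod_cast hcover)
  obtain ⟨x, hx, y, hy, hxy, hfar⟩ :=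
    exists_abs_sub_lt_one_of_card_lt hP (fun x => ∑ i, a i * x i) hsum hcard
  refine ⟨fun i => ⟨x i, (hPX (Fintype.mem_piFinset.1 hx i)).2⟩,
    fun i => ⟨y i, (hPX (Fintype.mem_piFinset.1 hy i)).2⟩, ?_, hfar⟩
  simpa [mul_sub, Finset.sum_sub_distrib] using hxy

lemma exists_inner_eq_dist_eq {V : Type*} [NormedAddCommGroup V] [InnerProductSpace ℝ V]
    (a₀ : V) {z : V} (hz : z ≠ 0) (u : ℝ) :
    ∃ a : V, inner ℝ a z = u ∧ dist a a₀ = |inner ℝ a₀ z - u| / ‖z‖ := by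
  have hz' : ‖z‖ ≠ 0 := norm_ne_zero_iff.2 hz
  refine ⟨a₀ - ((inner ℝ a₀ z - u) / ‖z‖ ^ 2) • z, ?_, ?_⟩
  · rw [inner_sub_left, real_inner_smul_left, real_inner_self_eq_norm_sq]
    field_simp
    ring
  · rw [dist_eq_norm, sub_sub_cancel_left, norm_neg, norm_smul, Real.norm_eq_abs, abs_div,
      abs_of_nonneg (sq_nonneg ‖z‖)]
    field_simp

lemma dense_setOf_exists_sum_eq {E : Set ℝ} {ε : ℝ}
    (hfreq : ∃ᶠ r in atTop, r ^ ε ≤ coverNum 1 (ball (0 : ℝ) r ∩ E)) {n : ℕ} (hn : 2 ≤ n * ε)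
    (u : ℝ) :
    Dense {a : EuclideanSpace ℝ (Fin n) | ∃ p : (Fin n → E) × (Fin n → E),
      ∑ i, a i * (p.1 i - p.2 i) = u} := by
  refine Metric.dense_iff.2 fun a₀ δ hδ => ?_
  obtain ⟨R, hR⟩ := exists_nat_gt ((1 + |u|) / δ)
  obtain ⟨x, y, hxy, i, hi⟩ := exists_abs_sum_lt_one_of_frequently hfreq hn a₀ R
  set z : EuclideanSpace ℝ (Fin n) := WithLp.toLp 2 fun i => (x i : ℝ) - y i
  have hinner : ∀ a : EuclideanSpace ℝ (Fin n), inner ℝ a z = ∑ i, a i * (x i - y i) := by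
    intro a
    simp [z, PiLp.inner_apply, mul_comm]
  have hRz : (R : ℝ) ≤ ‖z‖ := hi.trans (PiLp.norm_apply_le z i)
  have hRpos : (0 : ℝ) < R := lt_of_le_of_lt (by positivity) hR
  obtain ⟨a, hau, hdist⟩ := exists_inner_eq_dist_eq a₀ (norm_pos_iff.1 (hRpos.trans_le hRz)) u
  refine ⟨a, mem_ball.2 ?_, (x, y), (hinner a).symm.trans hau⟩
  calc dist a a₀ = |inner ℝ a₀ z - u| / ‖z‖ := hdist
    _ ≤ (1 + |u|) / R := by
        gcongr
        rw [hinner]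
        exact (abs_sub _ _).trans (by linarith)
    _ < δ := (div_lt_iff₀ hRpos).2 (by rwa [div_lt_iff₀ hδ, mul_comm] at hR)

lemma exists_denseRange_of_forall_dense {V ι Y : Type*} [TopologicalSpace V] [BaireSpace V]
    [Nonempty V] [TopologicalSpace Y] [SecondCountableTopology Y] (f : V → ι → Y)
    (hf : ∀ i, Continuous (f · i)) (hdense : ∀ y, Dense {a | ∃ i, f a i = y}) :
    ∃ a, DenseRange (f a) := by
  obtain ⟨B, hBc, hBne, hB⟩ := TopologicalSpace.exists_countable_basis Y
  have hG : Dense (⋂ U ∈ B, ⋃ i, (f · i) ⁻¹' U) := by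
    refine dense_biInter_of_isOpen (fun U hU => ?_) hBc fun U hU => ?_
    · exact isOpen_iUnion fun i => (hB.isOpen hU).preimage (hf i)
    · obtain ⟨y, hy⟩ := nonempty_iff_ne_empty.2 (ne_of_mem_of_not_mem hU hBne)
      refine (hdense y).mono ?_
      rintro a ⟨i, hi⟩
      exact mem_iUnion.2 ⟨i, by simp [hi, hy]⟩
  obtain ⟨a, ha⟩ := hG.nonempty
  refine ⟨a, hB.dense_iff.2 fun U hU _ => ?_⟩
  obtain ⟨i, hi⟩ := mem_iUnion.1 (mem_iInter₂.1 ha U hU)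
  exact ⟨f a i, hi, i, rfl⟩

theorem stmt0 (E : Set ℝ) (h : 0 < dimCM E) :
    ∃ (n : ℕ) (T : EuclideanSpace ℝ (Fin n) →ₗ[ℝ] ℝ),
      Dense (⇑T '' {x : EuclideanSpace ℝ (Fin n) | ∀ i, x i ∈ E}) := by
  obtain ⟨ε, hε, hfreq⟩ := exists_frequently_rpow_le_coverNum h
  obtain ⟨n, hn⟩ := exists_nat_ge (2 / ε)
  obtain ⟨a, ha⟩ := exists_denseRange_of_forall_dense
    (fun (a : EuclideanSpace ℝ (Fin n)) (p : (Fin n → E) × (Fin n → E)) =>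
      ∑ i, a i * (p.1 i - p.2 i))
    (fun p => by fun_prop) (dense_setOf_exists_sum_eq hfreq ((div_le_iff₀ hε).1 hn))
  let T : EuclideanSpace ℝ (Fin (n + n)) →L[ℝ] ℝ :=
    ∑ i, a i • (EuclideanSpace.proj (Fin.castAdd n i) - EuclideanSpace.proj (Fin.natAdd n i))
  refine ⟨n + n, T, ha.mono ?_⟩
  rintro _ ⟨⟨x, y⟩, rfl⟩
  exact ⟨WithLp.toLp 2 fun j => ((Fin.append x y j : E) : ℝ), fun j => (Fin.append x y j).2,
    by simp [T, -Fin.natAdd_eq_addNat]⟩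
end

section
/- Let D = { 2ⁿ : n ∈ ℕ } ∪ { 2ⁿ + n : n ∈ ℕ } ⊆ ℝ, let α ∈ ℝ be irrational, and let S : ℝ⁴ → ℝ be the linear map S(x₁,x₂,x₃,x₄) = (x₁ − x₂) + α(x₃ − x₄). Then S(D⁴) is dense in ℝ. -/
open Filter Metric Set

/-- The set `D = { 2^n : n ∈ ℕ } ∪ { 2^n + n : n ∈ ℕ }`. -/
def Dset : Set ℝ :=
  {x | ∃ n : ℕ, x = 2 ^ n} ∪ {x | ∃ n : ℕ, x = 2 ^ n + n}

lemma Dset.diff (m : ℤ) : ∃ a b : ℝ, a ∈ Dset ∧ b ∈ Dset ∧ a - b = m := by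
  rcases le_or_gt 0 m with hm | hm
  · refine ⟨2 ^ m.toNat + m.toNat, 2 ^ m.toNat, Or.inr ⟨m.toNat, rfl⟩,
      Or.inl ⟨m.toNat, rfl⟩, ?_⟩
    rw [add_sub_cancel_left]
    exact_mod_cast congrArg (Int.cast : ℤ → ℝ) (Int.toNat_of_nonneg hm)
  · refine ⟨2 ^ (-m).toNat, 2 ^ (-m).toNat + (-m).toNat, Or.inl ⟨(-m).toNat, rfl⟩,
      Or.inr ⟨(-m).toNat, rfl⟩, ?_⟩
    have h : ((-m).toNat : ℝ) = -m := by
      exact_mod_cast congrArg (Int.cast : ℤ → ℝ) (Int.toNat_of_nonneg (by linarith))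
    rw [sub_add_cancel_left, h, neg_neg]

lemma dense_closure_pair (α : ℝ) (hα : Irrational α) :
    Dense ((AddSubgroup.closure {1, α} : AddSubgroup ℝ) : Set ℝ) := by
  rcases AddSubgroup.dense_or_cyclic (AddSubgroup.closure {1, α}) with h | ⟨a, ha⟩
  · exact h
  · exfalso
    have h1 : (1 : ℝ) ∈ AddSubgroup.closure ({1, α} : Set ℝ) :=
      AddSubgroup.subset_closure (by simp)
    have h2 : α ∈ AddSubgroup.closure ({1, α} : Set ℝ) :=
      AddSubgroup.subset_closure (by simp)
    rw [ha, AddSubgroup.mem_closure_singleton] at h1 h2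
    obtain ⟨n, hn⟩ := h1
    obtain ⟨m, hm⟩ := h2
    rw [zsmul_eq_mul] at hn hm
    have hn0 : (n : ℝ) ≠ 0 := by
      intro h0; rw [h0, zero_mul] at hn; exact one_ne_zero hn.symm
    have ha' : a = 1 / n := by field_simp at hn ⊢; linarith
    have : α = (m : ℝ) / n := by rw [← hm, ha']; ring
    exact hα ⟨(m : ℚ) / n, by push_cast [this]; ring⟩

theorem stmt3 (α : ℝ) (hα : Irrational α) :
    Dense ((fun x : Fin 4 → ℝ => (x 0 - x 1) + α * (x 2 - x 3)) ''
      {x : Fin 4 → ℝ | ∀ i, x i ∈ Dset}) := by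
  refine (dense_closure_pair α hα).mono ?_
  intro z hz
  rw [SetLike.mem_coe, AddSubgroup.mem_closure_pair] at hz
  obtain ⟨m, n, hmn⟩ := hz
  obtain ⟨a, b, ha, hb, hab⟩ := Dset.diff m
  obtain ⟨c, d, hc, hd, hcd⟩ := Dset.diff n
  refine ⟨![a, b, c, d], fun i => ?_, ?_⟩
  · fin_cases i <;> simpa
  · show (a - b) + α * (c - d) = z
    rw [hab, hcd, ← hmn]
    push_cast [zsmul_eq_mul]
    ring
end

section
/- Suppose X ⊆ ℝⁿ and Y ⊆ ℝᵐ with 0 ∈ X and 0 ∈ Y, and f : X → Y is a quasi-isometry with f(0) = 0. Then X and Y have the same coarse Minkowski dimension. -/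
open Filter Metric Set

/-- `f` is a `(lam, δ)`-quasi-isometry from `X` to `Y`: it maps `X` into `Y`, satisfies the
two-sided quasi-isometric distance estimate on `X`, and its image is `δ`-dense in `Y`. -/
def IsQuasiIsometryOn {α β : Type*} [PseudoMetricSpace α] [PseudoMetricSpace β]
    (f : α → β) (X : Set α) (Y : Set β) (lam δ : ℝ) : Prop :=
  (∀ x ∈ X, f x ∈ Y) ∧
  (∀ x ∈ X, ∀ x' ∈ X,
    lam⁻¹ * dist x x' - δ ≤ dist (f x) (f x') ∧ dist (f x) (f x') ≤ lam * dist x x' + δ) ∧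
  (∀ y ∈ Y, ∃ x ∈ X, dist (f x) y < δ)

section basic
variable {α : Type*} [PseudoMetricSpace α] {δ : ℝ} {Z : Set α}

lemma coverNum_le {S : Finset α} (h : Z ⊆ ⋃ p ∈ S, ball p δ) : coverNum δ Z ≤ S.card :=
  Nat.sInf_le ⟨S, rfl, h⟩

lemma exists_cover_card (hne : ∃ S : Finset α, Z ⊆ ⋃ p ∈ S, ball p δ) :
    ∃ S : Finset α, S.card = coverNum δ Z ∧ Z ⊆ ⋃ p ∈ S, ball p δ := by
  obtain ⟨S, hS⟩ := hne
  have : coverNum δ Z ∈ {k : ℕ | ∃ S : Finset α, S.card = k ∧ Z ⊆ ⋃ p ∈ S, ball p δ} :=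
    Nat.sInf_mem ⟨S.card, S, rfl, hS⟩
  obtain ⟨S', h1, h2⟩ := this
  exact ⟨S', h1, h2⟩

lemma one_le_coverNum (hZ : Z.Nonempty) (hne : ∃ S : Finset α, Z ⊆ ⋃ p ∈ S, ball p δ) :
    1 ≤ coverNum δ Z := by
  obtain ⟨S, hcard, hcov⟩ := exists_cover_card hne
  rcases Nat.eq_zero_or_pos (coverNum δ Z) with h0 | h1
  · exfalso
    rw [h0, Finset.card_eq_zero] at hcard
    obtain ⟨z, hz⟩ := hZ
    have := hcov hz
    simp [hcard] at this
  · exact h1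

end basic

section proper
variable {E : Type*} [NormedAddCommGroup E] [ProperSpace E]

lemma exists_cover {Z : Set E} {r δ : ℝ} (hδ : 0 < δ) (hZ : Z ⊆ closedBall 0 r) :
    ∃ S : Finset E, Z ⊆ ⋃ p ∈ S, ball p δ := by
  have htb : TotallyBounded Z :=
    (isCompact_closedBall (0 : E) r).totallyBounded.subset hZ
  obtain ⟨t, ht, hcov⟩ := Metric.totallyBounded_iff.mp htb δ hδ
  refine ⟨ht.toFinset, ?_⟩
  intro z hz
  simpa using hcov hz

/-- Any ball of radius `s` can be covered by a uniformly bounded number of unit balls. -/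
lemma exists_unitCoverConst [DecidableEq E] {s : ℝ} (hs : 0 < s) :
    ∃ C : ℕ, 1 ≤ C ∧ ∀ x : E, ∃ S : Finset E, S.card ≤ C ∧ ball x s ⊆ ⋃ p ∈ S, ball p 1 := by
  obtain ⟨T, hT⟩ := exists_cover (Z := closedBall (0 : E) s) (r := s) one_pos Subset.rfl
  refine ⟨T.card, ?_, fun x => ?_⟩
  · rcases T.eq_empty_or_nonempty with h | h
    · exfalso
      have := hT (mem_closedBall_self hs.le)
      simp [h] at this
    · exact Finset.card_pos.mpr h
  · refine ⟨T.image (fun t => x + t), Finset.card_image_le, ?_⟩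
    intro z hz
    have hz' : z - x ∈ closedBall (0 : E) s := by
      simpa [dist_eq_norm] using (mem_ball.mp hz).le
    obtain ⟨t, ht, hzt⟩ := Set.mem_iUnion₂.mp (hT hz')
    refine Set.mem_iUnion₂.mpr ⟨x + t, Finset.mem_image_of_mem _ ht, ?_⟩
    have : dist z (x + t) = dist (z - x) t := by
      rw [dist_eq_norm, dist_eq_norm]
      congr 1
      abel
    simpa [mem_ball, this] using hzt

lemma coverNum_one_le_mul {Z : Set E} {s r : ℝ} (hs : 0 < s) (hZ : Z ⊆ closedBall 0 r)
    {C : ℕ} (hC : ∀ x : E, ∃ S : Finset E, S.card ≤ C ∧ ball x s ⊆ ⋃ p ∈ S, ball p 1) :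
    coverNum 1 Z ≤ C * coverNum s Z := by
  classical
  obtain ⟨S, hcard, hcov⟩ := exists_cover_card (exists_cover hs hZ)
  set F : E → Finset E := fun p => (hC p).choose with hF
  have hFcard : ∀ p, (F p).card ≤ C := fun p => (hC p).choose_spec.1
  have hFcov : ∀ p, ball p s ⊆ ⋃ q ∈ F p, ball q 1 := fun p => (hC p).choose_spec.2
  have hcov1 : Z ⊆ ⋃ q ∈ S.biUnion F, ball q 1 := by
    intro z hz
    obtain ⟨p, hp, hzp⟩ := Set.mem_iUnion₂.mp (hcov hz)
    obtain ⟨q, hq, hzq⟩ := Set.mem_iUnion₂.mp (hFcov p hzp)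
    exact Set.mem_iUnion₂.mpr ⟨q, Finset.mem_biUnion.mpr ⟨p, hp, hq⟩, hzq⟩
  calc coverNum 1 Z ≤ (S.biUnion F).card := coverNum_le hcov1
    _ ≤ ∑ p ∈ S, (F p).card := Finset.card_biUnion_le
    _ ≤ ∑ _p ∈ S, C := Finset.sum_le_sum (fun p _ => hFcard p)
    _ = S.card * C := by simp [Finset.sum_const, mul_comm]
    _ = C * coverNum s Z := by rw [hcard, mul_comm]

end proper

section iter
variable {E : Type*} [NormedAddCommGroup E] [NormedSpace ℝ E]

lemma scale_cover {T : Finset E} (hT : closedBall (0 : E) 1 ⊆ ⋃ t ∈ T, ball t (1/2))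
    (x : E) {s : ℝ} (hs : 0 < s) :
    closedBall x s ⊆ ⋃ t ∈ T, closedBall (x + s • t) (s / 2) := by
  intro z hz
  have h1 : s⁻¹ • (z - x) ∈ closedBall (0 : E) 1 := by
    rw [mem_closedBall, dist_zero_right, norm_smul, norm_inv, Real.norm_of_nonneg hs.le]
    rw [mem_closedBall, dist_eq_norm] at hz
    rw [inv_mul_le_iff₀ hs]
    linarith
  obtain ⟨t, ht, hzt⟩ := Set.mem_iUnion₂.mp (hT h1)
  refine Set.mem_iUnion₂.mpr ⟨t, ht, ?_⟩
  rw [mem_ball, dist_eq_norm] at hzt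
  rw [mem_closedBall, dist_eq_norm]
  have key : z - (x + s • t) = s • (s⁻¹ • (z - x) - t) := by
    rw [smul_sub, smul_smul, mul_inv_cancel₀ hs.ne', one_smul]
    abel
  rw [key, norm_smul, Real.norm_of_nonneg hs.le]
  calc s * ‖s⁻¹ • (z - x) - t‖ ≤ s * (1/2) := by nlinarith [hzt]
    _ = s / 2 := by ring

lemma iter_cover {T : Finset E} (hT : closedBall (0 : E) 1 ⊆ ⋃ t ∈ T, ball t (1/2)) :
    ∀ (k : ℕ) (x : E) (s : ℝ), 0 < s →
      ∃ S : Finset E, S.card ≤ T.card ^ k ∧ closedBall x s ⊆ ⋃ p ∈ S, closedBall p (s / 2 ^ k) := by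
  classical
  intro k
  induction k with
  | zero =>
    intro x s hs
    exact ⟨{x}, by simp, by simp⟩
  | succ k ih =>
    intro x s hs
    have hs2 : (0:ℝ) < s / 2 := by linarith
    refine ⟨T.biUnion (fun t => (ih (x + s • t) (s/2) hs2).choose), ?_, ?_⟩
    · calc (T.biUnion _).card ≤ ∑ t ∈ T, ((ih (x + s • t) (s/2) hs2).choose).card :=
          Finset.card_biUnion_le
        _ ≤ ∑ _t ∈ T, T.card ^ k := Finset.sum_le_sum
            (fun t _ => (ih (x + s • t) (s/2) hs2).choose_spec.1)
        _ = T.card * T.card ^ k := by simp [Finset.sum_const, mul_comm]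
        _ = T.card ^ (k+1) := by ring
    · intro z hz
      obtain ⟨t, ht, hzt⟩ := Set.mem_iUnion₂.mp (scale_cover hT x hs hz)
      obtain ⟨p, hp, hzp⟩ := Set.mem_iUnion₂.mp ((ih (x + s • t) (s/2) hs2).choose_spec.2 hzt)
      refine Set.mem_iUnion₂.mpr ⟨p, Finset.mem_biUnion.mpr ⟨t, ht, hp⟩, ?_⟩
      have : s / 2 / 2 ^ k = s / 2 ^ (k+1) := by ring
      rwa [this] at hzp

end iter

section poly
variable {E : Type*} [NormedAddCommGroup E] [NormedSpace ℝ E] [ProperSpace E]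

lemma eventually_quotient_le (Z : Set E) :
    ∃ Cv : ℝ, ∀ᶠ r in atTop,
      Real.log (coverNum 1 (ball (0:E) r ∩ Z) : ℝ) / Real.log r ≤ Cv := by
  obtain ⟨T, hT⟩ := exists_cover (Z := closedBall (0 : E) 1) (r := 1) (δ := 1/2) (by norm_num) Subset.rfl
  have hK1 : 1 ≤ T.card := by
    rcases T.eq_empty_or_nonempty with h | h
    · exfalso
      have := hT (mem_closedBall_self zero_le_one)
      simp [h] at this
    · exact Finset.card_pos.mpr h
  set K := T.card
  have hlogK : 0 ≤ Real.log K := Real.log_nonneg (by exact_mod_cast hK1)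
  refine ⟨3 * Real.log K / Real.log 2, ?_⟩
  filter_upwards [eventually_ge_atTop (2:ℝ)] with r hr
  have hr0 : (0:ℝ) < r := by linarith
  have hr1 : (1:ℝ) < r := by linarith
  have hlogr : 0 < Real.log r := Real.log_pos hr1
  set k : ℕ := ⌈Real.logb 2 r⌉₊ + 1 with hk
  have hlogb0 : (0:ℝ) ≤ Real.logb 2 r := Real.logb_nonneg one_lt_two (by linarith)
  have hlogb1 : (1:ℝ) ≤ Real.logb 2 r := by
    rw [Real.logb, le_div_iff₀ (Real.log_pos one_lt_two), one_mul]
    exact Real.log_le_log two_pos hr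
  have hkb : (k : ℝ) ≤ 3 * Real.logb 2 r := by
    have := Nat.ceil_lt_add_one hlogb0
    push_cast [hk]
    linarith
  have hrk : r < 2 ^ k := by
    have h1 : Real.logb 2 r < (k : ℝ) := by
      have := Nat.le_ceil (Real.logb 2 r)
      push_cast [hk]; linarith
    have := (Real.logb_lt_iff_lt_rpow one_lt_two hr0).mp h1
    rwa [Real.rpow_natCast] at this
  obtain ⟨S, hScard, hScov⟩ := iter_cover hT k 0 r hr0
  have hsub : ball (0:E) r ∩ Z ⊆ ⋃ p ∈ S, ball p 1 := by
    intro z hz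
    have hz' : z ∈ closedBall (0:E) r := ball_subset_closedBall hz.1
    obtain ⟨p, hp, hzp⟩ := Set.mem_iUnion₂.mp (hScov hz')
    refine Set.mem_iUnion₂.mpr ⟨p, hp, ?_⟩
    rw [mem_closedBall] at hzp
    rw [mem_ball]
    have h2k : (0:ℝ) < 2 ^ k := by positivity
    have : r / 2 ^ k < 1 := (div_lt_one h2k).mpr hrk
    linarith
  have hN : coverNum 1 (ball (0:E) r ∩ Z) ≤ K ^ k := le_trans (coverNum_le hsub) hScard
  have hlogN : Real.log (coverNum 1 (ball (0:E) r ∩ Z) : ℝ) ≤ (k : ℝ) * Real.log K := by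
    rcases Nat.eq_zero_or_pos (coverNum 1 (ball (0:E) r ∩ Z)) with h0 | hpos
    · rw [h0]; simp; positivity
    · calc Real.log (coverNum 1 (ball (0:E) r ∩ Z) : ℝ) ≤ Real.log ((K:ℝ) ^ k) := by
            apply Real.log_le_log (by exact_mod_cast hpos)
            exact_mod_cast hN
        _ = (k : ℝ) * Real.log K := by rw [Real.log_pow]
  calc Real.log (coverNum 1 (ball (0:E) r ∩ Z) : ℝ) / Real.log r
      ≤ ((k : ℝ) * Real.log K) / Real.log r := by
        gcongr
    _ ≤ (3 * Real.logb 2 r * Real.log K) / Real.log r := by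
        gcongr
    _ = 3 * Real.log K / Real.log 2 := by
        rw [Real.logb, ]
        field_simp

end poly

section main
variable {n m : ℕ}
local notation "En" => EuclideanSpace ℝ (Fin n)
local notation "Em" => EuclideanSpace ℝ (Fin m)

lemma coverNum_compare (X : Set En) (Y : Set Em) (f : En → Em) {lam c a b r : ℝ}
    (hlam : 0 < lam) (ha : 0 < a) (hr : 0 < r)
    (hmem : ∀ x ∈ X, f x ∈ Y)
    (hlow : ∀ x ∈ X, ∀ x' ∈ X, dist x x' ≤ lam * dist (f x) (f x') + c)
    (hnorm : ∀ x ∈ X, ‖f x‖ ≤ a * ‖x‖ + b) :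
    coverNum (2*lam+c+1) (ball 0 r ∩ X) ≤ coverNum 1 (ball 0 (a*r+b) ∩ Y) := by
  classical
  set R := a*r+b with hR
  have hYsub : ball (0:Em) R ∩ Y ⊆ closedBall 0 R :=
    fun y hy => ball_subset_closedBall hy.1
  obtain ⟨S, hcard, hcov⟩ := exists_cover_card (exists_cover one_pos hYsub)
  set φ : Em → En := fun q =>
    if h : ∃ x, x ∈ ball (0:En) r ∩ X ∧ f x ∈ ball q 1 then h.choose else 0 with hφ
  have hsub : ball (0:En) r ∩ X ⊆ ⋃ p ∈ S.image φ, ball p (2*lam+c+1) := by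
    intro x hx
    have hxr : ‖x‖ < r := by simpa [mem_ball, dist_zero_right] using hx.1
    have hfx : f x ∈ ball (0:Em) R ∩ Y := by
      refine ⟨?_, hmem x hx.2⟩
      rw [mem_ball, dist_zero_right]
      calc ‖f x‖ ≤ a * ‖x‖ + b := hnorm x hx.2
        _ < a * r + b := by nlinarith
    obtain ⟨q, hq, hfxq⟩ := Set.mem_iUnion₂.mp (hcov hfx)
    have hex : ∃ x', x' ∈ ball (0:En) r ∩ X ∧ f x' ∈ ball q 1 := ⟨x, hx, hfxq⟩
    have hφq : φ q = hex.choose := by rw [hφ]; exact dif_pos hex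
    obtain ⟨hx0mem, hfx0⟩ := hex.choose_spec
    refine Set.mem_iUnion₂.mpr ⟨φ q, Finset.mem_image_of_mem φ hq, ?_⟩
    rw [mem_ball, hφq]
    have hd : dist (f x) (f hex.choose) < 2 := by
      calc dist (f x) (f hex.choose) ≤ dist (f x) q + dist (f hex.choose) q :=
        dist_triangle_right _ _ _
      _ < 2 := by
        have := mem_ball.mp hfxq
        have := mem_ball.mp hfx0
        linarith
    calc dist x hex.choose ≤ lam * dist (f x) (f hex.choose) + c := hlow x hx.2 _ hx0mem.2
      _ < 2*lam + c + 1 := by nlinarith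
  calc coverNum (2*lam+c+1) (ball (0:En) r ∩ X) ≤ (S.image φ).card := coverNum_le hsub
    _ ≤ S.card := Finset.card_image_le
    _ = _ := hcard

lemma dimCM_le_dimCM (X : Set En) (Y : Set Em)
    (h0X : (0 : En) ∈ X) (h0Y : (0 : Em) ∈ Y) (f : En → Em) {lam c a b : ℝ}
    (hlam : 0 < lam) (hc : 0 ≤ c) (ha : 0 < a) (hb : 0 ≤ b)
    (hmem : ∀ x ∈ X, f x ∈ Y)
    (hlow : ∀ x ∈ X, ∀ x' ∈ X, dist x x' ≤ lam * dist (f x) (f x') + c)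
    (hnorm : ∀ x ∈ X, ‖f x‖ ≤ a * ‖x‖ + b) :
    dimCM X ≤ dimCM Y := by
  classical
  have hs : (0:ℝ) < 2*lam+c+1 := by linarith
  obtain ⟨C, hC1, hC⟩ := exists_unitCoverConst (E := En) hs
  set NX : ℝ → ℕ := fun r => coverNum 1 (ball (0:En) r ∩ X) with hNX
  set NY : ℝ → ℕ := fun r => coverNum 1 (ball (0:Em) r ∩ Y) with hNY
  set u : ℝ → ℝ := fun r => Real.log (NX r : ℝ) / Real.log r with hu
  set v : ℝ → ℝ := fun r => Real.log (NY r : ℝ) / Real.log r with hv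
  have key : ∀ r : ℝ, 0 < r → NX r ≤ C * NY (a*r+b) := by
    intro r hr
    calc NX r ≤ C * coverNum (2*lam+c+1) (ball (0:En) r ∩ X) :=
          coverNum_one_le_mul hs (fun x hx => ball_subset_closedBall hx.1) hC
      _ ≤ C * NY (a*r+b) :=
          Nat.mul_le_mul_left C (coverNum_compare X Y f hlam ha hr hmem hlow hnorm)
  have hNXpos : ∀ r : ℝ, 0 < r → 1 ≤ NX r := fun r hr =>
    one_le_coverNum ⟨0, mem_ball_self hr, h0X⟩
      (exists_cover one_pos (fun x hx => ball_subset_closedBall hx.1))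
  have hNYpos : ∀ r : ℝ, 0 < r → 1 ≤ NY r := fun r hr =>
    one_le_coverNum ⟨0, mem_ball_self hr, h0Y⟩
      (exists_cover one_pos (fun x hx => ball_subset_closedBall hx.1))
  obtain ⟨Cv, hCv⟩ := eventually_quotient_le Y
  have hvb : IsBoundedUnder (· ≤ ·) atTop v := isBoundedUnder_of_eventually_le hCv
  have hu0 : ∀ᶠ r in atTop, 0 ≤ u r := by
    filter_upwards [eventually_gt_atTop (1:ℝ)] with r hr
    have h1 : (1:ℝ) ≤ (NX r : ℝ) := by exact_mod_cast hNXpos r (by linarith)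
    exact div_nonneg (Real.log_nonneg h1) (Real.log_pos hr).le
  have hucb : IsCoboundedUnder (· ≤ ·) atTop u :=
    (isBoundedUnder_of_eventually_ge hu0).isCoboundedUnder_le
  show limsup u atTop ≤ limsup v atTop
  apply le_of_forall_pos_le_add
  intro ε hε
  set L := limsup v atTop with hL
  have htend : Tendsto (fun r : ℝ => a*r+b) atTop atTop :=
    tendsto_atTop_add_const_right _ b (tendsto_id.const_mul_atTop ha)
  have h1 : ∀ᶠ r in atTop, v (a*r+b) < L + ε/2 :=
    htend.eventually (eventually_lt_of_limsup_lt (by linarith) hvb)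
  -- the comparison function w
  set w : ℝ → ℝ := fun r =>
    Real.log (C:ℝ) / Real.log r + (L + ε/2) * (Real.log (a*r+b) / Real.log r) with hw
  have t1 : Tendsto (fun r : ℝ => Real.log (C:ℝ) / Real.log r) atTop (nhds 0) :=
    tendsto_const_nhds.div_atTop Real.tendsto_log_atTop
  have t2 : Tendsto (fun r : ℝ => Real.log (a*r+b) / Real.log r) atTop (nhds 1) := by
    have e1 : ∀ᶠ r in atTop, 1 + Real.log (a + b/r) / Real.log r
        = Real.log (a*r+b) / Real.log r := by
      filter_upwards [eventually_gt_atTop (1:ℝ)] with r hr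
      have hr0 : (0:ℝ) < r := by linarith
      have habr : (0:ℝ) < a + b/r := by positivity
      have hlogr : Real.log r ≠ 0 := (Real.log_pos hr).ne'
      have : a*r+b = r * (a + b/r) := by field_simp
      rw [this, Real.log_mul hr0.ne' habr.ne', add_div, div_self hlogr]
    have t2' : Tendsto (fun r : ℝ => Real.log (a + b/r)) atTop (nhds (Real.log a)) := by
      have hb0 : Tendsto (fun r : ℝ => a + b/r) atTop (nhds a) := by
        have := tendsto_const_nhds (x := b) (f := atTop (α := ℝ)) |>.div_atTop tendsto_id
        simpa using tendsto_const_nhds.add this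
      exact ((Real.continuousAt_log ha.ne').tendsto).comp hb0
    have t2'' : Tendsto (fun r : ℝ => Real.log (a + b/r) / Real.log r) atTop (nhds 0) :=
      t2'.div_atTop Real.tendsto_log_atTop
    have := tendsto_const_nhds (x := (1:ℝ)) (f := atTop (α := ℝ)) |>.add t2''
    rw [add_zero] at this
    exact this.congr' e1
  have h2 : Tendsto w atTop (nhds (L + ε/2)) := by
    have := t1.add ((tendsto_const_nhds (x := L + ε/2)).mul t2)
    simpa using this
  have h3 : ∀ᶠ r in atTop, u r ≤ w r := by
    filter_upwards [h1, eventually_gt_atTop (1:ℝ), htend.eventually (eventually_gt_atTop (1:ℝ))]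
      with r hvr hr hR
    have hr0 : (0:ℝ) < r := by linarith
    have hlogr : (0:ℝ) < Real.log r := Real.log_pos hr
    have hlogR : (0:ℝ) < Real.log (a*r+b) := Real.log_pos hR
    have hNY1 : 1 ≤ NY (a*r+b) := hNYpos _ (by linarith)
    have hNX1 : 1 ≤ NX r := hNXpos _ hr0
    have hlogNX : Real.log (NX r : ℝ) ≤ Real.log (C:ℝ) + Real.log (NY (a*r+b) : ℝ) := by
      have hle : (NX r : ℝ) ≤ (C:ℝ) * (NY (a*r+b) : ℝ) := by
        exact_mod_cast key r hr0
      calc Real.log (NX r : ℝ) ≤ Real.log ((C:ℝ) * (NY (a*r+b) : ℝ)) :=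
          Real.log_le_log (by exact_mod_cast hNX1) hle
        _ = _ := Real.log_mul (Nat.cast_ne_zero.mpr (Nat.one_le_iff_ne_zero.mp hC1))
              (Nat.cast_ne_zero.mpr (Nat.one_le_iff_ne_zero.mp hNY1))
    have hlogNY : Real.log (NY (a*r+b) : ℝ) ≤ (L + ε/2) * Real.log (a*r+b) := by
      have hveq : Real.log (NY (a*r+b) : ℝ) = v (a*r+b) * Real.log (a*r+b) :=
        (div_mul_cancel₀ _ hlogR.ne').symm
      rw [hveq]
      exact mul_le_mul_of_nonneg_right hvr.le hlogR.le
    calc u r = Real.log (NX r : ℝ) / Real.log r := rfl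
      _ ≤ (Real.log (C:ℝ) + (L + ε/2) * Real.log (a*r+b)) / Real.log r :=
        (div_le_div_iff_of_pos_right hlogr).mpr (by linarith)
      _ = w r := by rw [hw]; ring
  have h4 : ∀ᶠ r in atTop, w r < L + ε := h2.eventually_lt_const (by linarith)
  have h5 : ∀ᶠ r in atTop, u r ≤ L + ε := by
    filter_upwards [h3, h4] with r hr1 hr2
    linarith
  exact limsup_le_of_le hucb h5
end main

theorem stmt8 (n m : ℕ) (X : Set (EuclideanSpace ℝ (Fin n)))
    (Y : Set (EuclideanSpace ℝ (Fin m)))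
    (h0X : (0 : EuclideanSpace ℝ (Fin n)) ∈ X) (h0Y : (0 : EuclideanSpace ℝ (Fin m)) ∈ Y)
    (f : EuclideanSpace ℝ (Fin n) → EuclideanSpace ℝ (Fin m)) (hf0 : f 0 = 0)
    (lam δ : ℝ) (hlam : 0 < lam) (hδ : 0 < δ)
    (hf : IsQuasiIsometryOn f X Y lam δ) :
    dimCM X = dimCM Y := by
  classical
  obtain ⟨hmem, hdist, hdense⟩ := hf
  have hlaminv : lam * lam⁻¹ = 1 := mul_inv_cancel₀ hlam.ne'
  apply le_antisymm
  · -- use f directly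
    refine dimCM_le_dimCM X Y h0X h0Y f hlam (c := lam * δ) (a := lam) (b := δ)
      (by positivity) hlam hδ.le hmem ?_ ?_
    · intro x hx x' hx'
      have h := (hdist x hx x' hx').1
      have h2 := mul_le_mul_of_nonneg_left (by linarith : lam⁻¹ * dist x x' ≤ dist (f x) (f x') + δ) hlam.le
      rw [← mul_assoc, hlaminv, one_mul] at h2
      linarith [h2]
    · intro x hx
      have h := (hdist x hx 0 h0X).2
      rw [hf0] at h
      rw [← dist_zero_right, ← dist_zero_right]
      calc dist (f x) 0 ≤ lam * dist x 0 + δ := h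
        _ = lam * dist x 0 + δ := rfl
  · -- construct a quasi-inverse g
    set g : EuclideanSpace ℝ (Fin m) → EuclideanSpace ℝ (Fin n) := fun y =>
      if h : y ∈ Y then (hdense y h).choose else 0 with hg
    have hgX : ∀ y ∈ Y, g y ∈ X := by
      intro y hy
      rw [hg]; simp only [dif_pos hy]
      exact (hdense y hy).choose_spec.1
    have hgd : ∀ y ∈ Y, dist (f (g y)) y < δ := by
      intro y hy
      rw [hg]; simp only [dif_pos hy]
      exact (hdense y hy).choose_spec.2
    refine dimCM_le_dimCM Y X h0Y h0X g hlam (c := 3 * δ) (a := lam) (b := 2 * lam * δ)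
      (by positivity) hlam (by positivity) hgX ?_ ?_
    · intro y hy y' hy'
      have h1 := hgd y hy
      have h2 := hgd y' hy'
      have h3 := (hdist (g y) (hgX y hy) (g y') (hgX y' hy')).2
      calc dist y y' ≤ dist y (f (g y)) + dist (f (g y)) (f (g y')) + dist (f (g y')) y' :=
            dist_triangle4 y (f (g y)) (f (g y')) y'
        _ ≤ δ + (lam * dist (g y) (g y') + δ) + δ := by
            rw [dist_comm y (f (g y))]
            gcongr
        _ = lam * dist (g y) (g y') + 3 * δ := by ring
    · intro y hy
      have h1 := (hdist (g y) (hgX y hy) 0 h0X).1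
      rw [hf0] at h1
      have h2 : dist (f (g y)) 0 ≤ δ + ‖y‖ := by
        calc dist (f (g y)) 0 ≤ dist (f (g y)) y + dist y 0 := dist_triangle _ _ _
          _ ≤ δ + ‖y‖ := by
              rw [dist_zero_right]
              exact add_le_add (hgd y hy).le le_rfl
      have h3 : lam⁻¹ * dist (g y) 0 ≤ ‖y‖ + 2 * δ := by linarith
      have h4 := mul_le_mul_of_nonneg_left h3 hlam.le
      rw [← mul_assoc, hlaminv, one_mul] at h4
      rw [← dist_zero_right]
      calc dist (g y) 0 ≤ lam * (‖y‖ + 2 * δ) := h4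
        _ = lam * ‖y‖ + 2 * lam * δ := by ring
end

section
/- Let F be a nonempty subset of ℝ², let u be a unit vector in ℝ², and suppose that the difference set F − F = { x − y : x, y ∈ F } is disjoint from some double wedge around u. Then the restriction of the orthogonal projection T_u to F is a quasi-isometric embedding of F into ℝ. -/
open Filter Metric Set

/-- `Tu u : ℝ² → ℝ` is the orthogonal projection parallel to `u`, i.e. the orthogonal projection
(with the orthogonal complement of `u` identified isometrically with `ℝ`) whose fibers are the
lines parallel to `u`: `Tu u x = Tu u y ↔ x - y = t • u` for some `t : ℝ` (when `‖u‖ = 1`). -/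
def Tu (u x : EuclideanSpace ℝ (Fin 2)) : ℝ :=
  x 0 * u 1 - x 1 * u 0

/-- The double wedge `C^u_{s,ε} = { t • v : |t| > s, ‖v‖ = 1, ‖v - u‖ < ε }` around `u`. -/
def doubleWedge (u : EuclideanSpace ℝ (Fin 2)) (s ε : ℝ) : Set (EuclideanSpace ℝ (Fin 2)) :=
  {w | ∃ (t : ℝ) (v : EuclideanSpace ℝ (Fin 2)), s < |t| ∧ ‖v‖ = 1 ∧ ‖v - u‖ < ε ∧ w = t • v}

/-! For a unit vector `u` and `n = ‖w‖`, the numbers `Tu u w` and `⟪w, u⟫` are the coordinates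
of `w` in the orthonormal frame of `u`, so `|Tu u w| ≤ ‖w‖` and
`‖w - n • u‖ * ‖w + n • u‖ = 2 * n * |Tu u w|`. A long difference `w ∈ F - F` lies outside the
double wedge together with `-w`, which makes both factors at least `ε * n`; hence
`|Tu u w| ≥ ε ^ 2 / 2 * ‖w‖`. Short differences are absorbed by the additive constant. -/

open RealInnerProductSpace

lemma Tu_sub (u x y : EuclideanSpace ℝ (Fin 2)) : Tu u (x - y) = Tu u x - Tu u y := by
  simp only [Tu, PiLp.sub_apply]
  ring

lemma Tu_sq_add_inner_sq (u w : EuclideanSpace ℝ (Fin 2)) :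
    Tu u w ^ 2 + ⟪w, u⟫ ^ 2 = ‖w‖ ^ 2 * ‖u‖ ^ 2 := by
  simp only [Tu, EuclideanSpace.norm_sq_eq, PiLp.inner_apply, Fin.sum_univ_two,
    Real.norm_eq_abs, sq_abs, RCLike.inner_apply, conj_trivial]
  ring

lemma abs_Tu_le (u w : EuclideanSpace ℝ (Fin 2)) : |Tu u w| ≤ ‖w‖ * ‖u‖ :=
  abs_le_of_sq_le_sq (by nlinarith [Tu_sq_add_inner_sq u w, sq_nonneg ⟪w, u⟫])
    (by positivity)

lemma norm_sub_smul_mul_norm_add_smul {u : EuclideanSpace ℝ (Fin 2)} (hu : ‖u‖ = 1)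
    (w : EuclideanSpace ℝ (Fin 2)) :
    ‖w - ‖w‖ • u‖ * ‖w + ‖w‖ • u‖ = 2 * ‖w‖ * |Tu u w| := by
  have hsq : (‖w - ‖w‖ • u‖ * ‖w + ‖w‖ • u‖) ^ 2 = (2 * ‖w‖ * |Tu u w|) ^ 2 := by
    rw [mul_pow, norm_sub_sq_real, norm_add_sq_real, norm_smul, real_inner_smul_right,
      Real.norm_of_nonneg (norm_nonneg w), hu, mul_pow, mul_pow, sq_abs, one_pow, mul_one]
    have h := Tu_sq_add_inner_sq u w
    rw [hu] at h
    linear_combination (-4 * ‖w‖ ^ 2) * h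
  exact (pow_left_inj₀ (by positivity) (by positivity) two_ne_zero).1 hsq

lemma neg_mem_doubleWedge {u w : EuclideanSpace ℝ (Fin 2)} {s ε : ℝ}
    (hw : w ∈ doubleWedge u s ε) : -w ∈ doubleWedge u s ε := by
  obtain ⟨t, v, ht, hv, hvu, rfl⟩ := hw
  exact ⟨-t, v, by rwa [abs_neg], hv, hvu, (neg_smul t v).symm⟩

lemma mul_norm_le_norm_sub_smul_of_notMem_doubleWedge {u w : EuclideanSpace ℝ (Fin 2)}
    {s ε : ℝ} (hw : w ∉ doubleWedge u s ε) (hs : s < ‖w‖) :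
    ε * ‖w‖ ≤ ‖w - ‖w‖ • u‖ := by
  by_contra! h
  have hw0 : 0 < ‖w‖ := by
    by_contra! hw0
    rw [le_antisymm hw0 (norm_nonneg w), mul_zero] at h
    exact (norm_nonneg _).not_gt h
  refine hw ⟨‖w‖, ‖w‖⁻¹ • w, by rwa [abs_norm], ?_, ?_, ?_⟩
  · rw [norm_smul, norm_inv, norm_norm, inv_mul_cancel₀ hw0.ne']
  · rw [show ‖w‖⁻¹ • w - u = ‖w‖⁻¹ • (w - ‖w‖ • u) by
      rw [smul_sub, smul_smul, inv_mul_cancel₀ hw0.ne', one_smul],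
      norm_smul, norm_inv, norm_norm, inv_mul_lt_iff₀ hw0, mul_comm]
    exact h
  · rw [smul_smul, mul_inv_cancel₀ hw0.ne', one_smul]

lemma mul_norm_le_abs_Tu_of_notMem_doubleWedge {u w : EuclideanSpace ℝ (Fin 2)} {s ε : ℝ}
    (hu : ‖u‖ = 1) (hε : 0 ≤ ε) (hw : w ∉ doubleWedge u s ε) (hs : s < ‖w‖) :
    ε ^ 2 / 2 * ‖w‖ ≤ |Tu u w| := by
  have hsub := mul_norm_le_norm_sub_smul_of_notMem_doubleWedge hw hs
  have hadd : ε * ‖w‖ ≤ ‖w + ‖w‖ • u‖ := by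
    have h := mul_norm_le_norm_sub_smul_of_notMem_doubleWedge (w := -w)
      (mt neg_mem_doubleWedge (by rwa [neg_neg])) (by rwa [norm_neg])
    rwa [norm_neg, ← neg_add', norm_neg] at h
  have key : (ε * ‖w‖) * (ε * ‖w‖) ≤ 2 * ‖w‖ * |Tu u w| :=
    norm_sub_smul_mul_norm_add_smul hu w ▸
      mul_le_mul hsub hadd (by positivity) (norm_nonneg _)
  rcases (norm_nonneg w).eq_or_lt with hw0 | hw0
  · rw [← hw0, mul_zero]
    exact abs_nonneg _
  · exact le_of_mul_le_mul_left (by linear_combination key) (by positivity : 0 < 2 * ‖w‖)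

lemma exists_isQuasiIsometryOn_image {α β : Type*} [PseudoMetricSpace α] [PseudoMetricSpace β]
    {f : α → β} {X : Set α} {c s : ℝ} (hc : 0 < c) (hs : 0 ≤ s)
    (hlip : ∀ x ∈ X, ∀ x' ∈ X, dist (f x) (f x') ≤ dist x x')
    (hlow : ∀ x ∈ X, ∀ x' ∈ X, s < dist x x' → c * dist x x' ≤ dist (f x) (f x')) :
    ∃ lam δ : ℝ, 0 < lam ∧ 0 < δ ∧ IsQuasiIsometryOn f X (f '' X) lam δ := by
  have hlam : 1 ≤ max 1 c⁻¹ := le_max_left _ _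
  have hinv_le_one : (max 1 c⁻¹)⁻¹ ≤ 1 := inv_le_one_of_one_le₀ hlam
  have hinv_le_c : (max 1 c⁻¹)⁻¹ ≤ c := inv_le_of_inv_le₀ hc (le_max_right _ _)
  refine ⟨max 1 c⁻¹, s + 1, by positivity, by positivity, fun x hx ↦ mem_image_of_mem f hx,
    fun x hx x' hx' ↦ ⟨?_, ?_⟩, ?_⟩
  · have hd := dist_nonneg (x := x) (y := x')
    by_cases hsd : s < dist x x'
    · nlinarith [hlow x hx x' hx' hsd]
    · nlinarith [dist_nonneg (x := f x) (y := f x')]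
  · nlinarith [hlip x hx x' hx', dist_nonneg (x := x) (y := x')]
  · rintro _ ⟨x, hx, rfl⟩
    exact ⟨x, hx, by rw [dist_self]; positivity⟩

theorem stmt9_general (F : Set (EuclideanSpace ℝ (Fin 2)))
    (u : EuclideanSpace ℝ (Fin 2)) (hu : ‖u‖ = 1) (s ε : ℝ) (hs : 0 < s) (hε : 0 < ε)
    (hdisj : Disjoint {w | ∃ x ∈ F, ∃ y ∈ F, w = x - y} (doubleWedge u s ε)) :
    ∃ lam δ : ℝ, 0 < lam ∧ 0 < δ ∧ IsQuasiIsometryOn (Tu u) F (Tu u '' F) lam δ := by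
  have hdiff : ∀ x ∈ F, ∀ x' ∈ F, x - x' ∉ doubleWedge u s ε :=
    fun x hx x' hx' ↦ disjoint_left.1 hdisj ⟨x, hx, x', hx', rfl⟩
  have hdist : ∀ x x', dist (Tu u x) (Tu u x') = |Tu u (x - x')| := by
    intro x x'
    rw [Tu_sub, Real.dist_eq]
  refine exists_isQuasiIsometryOn_image (c := ε ^ 2 / 2) (by positivity) hs.le ?_ ?_
  · intro x _ x' _
    rw [hdist, dist_eq_norm, ← mul_one ‖x - x'‖, ← hu]
    exact abs_Tu_le u (x - x')
  · intro x hx x' hx' hsd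
    rw [dist_eq_norm] at hsd ⊢
    rw [hdist]
    exact mul_norm_le_abs_Tu_of_notMem_doubleWedge hu hε.le (hdiff x hx x' hx') hsd

theorem stmt9 (F : Set (EuclideanSpace ℝ (Fin 2))) (hF : F.Nonempty)
    (u : EuclideanSpace ℝ (Fin 2)) (hu : ‖u‖ = 1) (s ε : ℝ) (hs : 0 < s) (hε : 0 < ε)
    (hdisj : Disjoint {w | ∃ x ∈ F, ∃ y ∈ F, w = x - y} (doubleWedge u s ε)) :
    ∃ lam δ : ℝ, 0 < lam ∧ 0 < δ ∧ IsQuasiIsometryOn (Tu u) F (Tu u '' F) lam δ :=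
  stmt9_general F u hu s ε hs hε hdisj
end

section
/- Suppose F ⊆ ℍ intersects every wedge in ℍ, where ℍ = { (x,y) ∈ ℝ² : y > 0 } is the open upper half plane. Then there is a unit vector u ∈ 𝕊⁺ = 𝕊 ∩ ℍ such that T_u(F) is dense in ℝ. -/
open Filter Metric Set

/-- The open upper half plane `ℍ = { (x,y) ∈ ℝ² : y > 0 }`. -/
def upperH : Set (EuclideanSpace ℝ (Fin 2)) := {z | 0 < z 1}

/-- The wedge `C^{u,+}_{s,ε} = { t • v : t > s, ‖v‖ = 1, ‖v - u‖ < ε }` around `u`. -/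
def wedgeH (u : EuclideanSpace ℝ (Fin 2)) (s ε : ℝ) : Set (EuclideanSpace ℝ (Fin 2)) :=
  {w | ∃ (t : ℝ) (v : EuclideanSpace ℝ (Fin 2)), s < t ∧ ‖v‖ = 1 ∧ ‖v - u‖ < ε ∧ w = t • v}

/-! Parametrize the directions of `𝕊⁺` by the slope `a ∈ ℝ` of `(a, 1)`; up to a positive factor,
`T_u x = x₀ - a x₁`. Points of `F` deep inside the wedge around the direction of slope `a₀` have
large height `x₁` and slope `x₀ / x₁` close to `a₀`, so `x₀ - a x₁` takes any prescribed value `y`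
for some `a` close to `a₀`. Thus for every `y` the slopes `a` with `y ∈ T_a(F)` are dense, and by
Baire's theorem (over a countable basis of `ℝ`) so are the slopes `a` with `T_a(F)` dense. -/

open TopologicalSpace in
theorem dense_setOf_dense_image {Θ α X : Type*} [TopologicalSpace Θ] [BaireSpace Θ]
    [TopologicalSpace X] [SecondCountableTopology X] {g : Θ → α → X}
    (hg : ∀ x, Continuous (g · x)) {F : Set α} (h : ∀ y, Dense {θ | y ∈ g θ '' F}) :
    Dense {θ | Dense (g θ '' F)} := by
  set hits : Set X → Set Θ := fun o => ⋃ x ∈ F, (g · x) ⁻¹' o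
  have hits_open (o : Set X) (ho : o ∈ countableBasis X) : IsOpen (hits o) :=
    isOpen_biUnion fun x _ => (isOpen_of_mem_countableBasis ho).preimage (hg x)
  have hits_dense (o : Set X) (ho : o ∈ countableBasis X) : Dense (hits o) := by
    obtain ⟨y, hy⟩ := nonempty_of_mem_countableBasis ho
    refine (h y).mono ?_
    rintro θ ⟨x, hxF, rfl⟩
    exact mem_biUnion hxF hy
  refine (dense_biInter_of_isOpen hits_open (countable_countableBasis X) hits_dense).mono ?_
  intro θ hθ
  refine (isBasis_countableBasis X).dense_iff.2 fun o ho _ => ?_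
  obtain ⟨x, hxF, hxo⟩ := mem_iUnion₂.1 (mem_iInter₂.1 hθ o ho)
  exact ⟨g θ x, hxo, mem_image_of_mem _ hxF⟩

noncomputable def slopeDir (a : ℝ) : EuclideanSpace ℝ (Fin 2) := ‖!₂[a, 1]‖⁻¹ • !₂[a, 1]

lemma norm_slopeDir (a : ℝ) : ‖slopeDir a‖ = 1 :=
  norm_smul_inv_norm fun h => by simpa using congrArg (· 1) h

lemma slopeDir_apply_one_pos (a : ℝ) : 0 < slopeDir a 1 := by
  simp [slopeDir]

lemma slopeDir_apply_zero (a : ℝ) : slopeDir a 0 = a * slopeDir a 1 := by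
  simp [slopeDir, mul_comm]

lemma Tu_slopeDir (a : ℝ) (x : EuclideanSpace ℝ (Fin 2)) :
    Tu (slopeDir a) x = slopeDir a 1 * (x 0 - a * x 1) := by
  rw [Tu, slopeDir_apply_zero]; ring

lemma exists_mem_high_slope_near {F : Set (EuclideanSpace ℝ (Fin 2))}
    (hint : ∀ (u : EuclideanSpace ℝ (Fin 2)) (s ε : ℝ), ‖u‖ = 1 → 0 < u 1 →
      0 < s → 0 < ε → wedgeH u s ε ⊆ upperH → (F ∩ wedgeH u s ε).Nonempty)
    (a R : ℝ) {r : ℝ} (hr : 0 < r) : ∃ x ∈ F, R < x 1 ∧ |x 0 / x 1 - a| < r := by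
  set u := slopeDir a
  set c := u 1
  have hc : 0 < c := slopeDir_apply_one_pos a
  have hu : u 0 / c = a := by rw [slopeDir_apply_zero, mul_div_cancel_right₀ _ hc.ne']
  have hslope : ContinuousAt (fun v : EuclideanSpace ℝ (Fin 2) => v 0 / v 1) u := by
    fun_prop (disch := exact hc.ne')
  obtain ⟨δ, hδ, hδslope⟩ := Metric.continuousAt_iff.1 hslope r hr
  set ε := min δ (c / 2)
  have hε : 0 < ε := lt_min hδ (half_pos hc)
  have hv1 {v : EuclideanSpace ℝ (Fin 2)} (hv : ‖v - u‖ < ε) : c / 2 < v 1 := by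
    have h1 : |v 1 - u 1| < c / 2 := by
      have := PiLp.norm_apply_le (v - u) 1
      rw [PiLp.sub_apply, Real.norm_eq_abs] at this
      exact this.trans_lt (hv.trans_le (min_le_right _ _))
    linarith [(abs_lt.1 h1).1]
  set s := 2 * |R| / c + 1
  have hs : 0 < s := by positivity
  have hwedge : wedgeH u s ε ⊆ upperH := by
    rintro _ ⟨t, v, hst, -, hvu, rfl⟩
    exact mul_pos (hs.trans hst) ((half_pos hc).trans (hv1 hvu))
  obtain ⟨_, hxF, t, v, hst, -, hvu, rfl⟩ :=
    hint u s ε (norm_slopeDir a) hc hs hε hwedge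
  have ht : 0 < t := hs.trans hst
  refine ⟨t • v, hxF, ?_, ?_⟩
  · calc R < s * (c / 2) := by
          rw [show s * (c / 2) = |R| + c / 2 by simp only [s]; field_simp]
          linarith [le_abs_self R]
      _ < t * v 1 := mul_lt_mul'' hst (hv1 hvu) hs.le (half_pos hc).le
  · have h := hδslope (show dist v u < δ from (dist_eq_norm v u ▸ hvu).trans_le (min_le_left _ _))
    simp only [PiLp.smul_apply, smul_eq_mul, mul_div_mul_left _ _ ht.ne']
    rwa [Real.dist_eq, hu] at h

lemma dense_setOf_mem_image_sub_mul {F : Set (EuclideanSpace ℝ (Fin 2))}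
    (hint : ∀ (u : EuclideanSpace ℝ (Fin 2)) (s ε : ℝ), ‖u‖ = 1 → 0 < u 1 →
      0 < s → 0 < ε → wedgeH u s ε ⊆ upperH → (F ∩ wedgeH u s ε).Nonempty) (y : ℝ) :
    Dense {a : ℝ | y ∈ (fun x : EuclideanSpace ℝ (Fin 2) => x 0 - a * x 1) '' F} := by
  refine Metric.dense_iff.2 fun a₀ r hr => ?_
  obtain ⟨x, hxF, hx1, hx⟩ := exists_mem_high_slope_near hint a₀ (2 * |y| / r) (half_pos hr)
  have hx1_pos : 0 < x 1 := lt_of_le_of_lt (by positivity) hx1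
  have hy : |y / x 1| < r / 2 := by
    rw [abs_div, abs_of_pos hx1_pos, div_lt_iff₀ hx1_pos]
    rw [div_lt_iff₀ hr] at hx1
    linarith
  refine ⟨(x 0 - y) / x 1, ?_, x, hxF, ?_⟩
  · rw [mem_ball, Real.dist_eq, sub_div]
    calc |x 0 / x 1 - y / x 1 - a₀| ≤ |x 0 / x 1 - a₀| + |y / x 1| := by
          rw [sub_right_comm]; exact abs_sub _ _
      _ < r := by linarith
  · dsimp only
    rw [div_mul_cancel₀ _ hx1_pos.ne']
    ring

theorem stmt10_general (F : Set (EuclideanSpace ℝ (Fin 2)))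
    (hint : ∀ (u : EuclideanSpace ℝ (Fin 2)) (s ε : ℝ), ‖u‖ = 1 → 0 < u 1 →
      0 < s → 0 < ε → wedgeH u s ε ⊆ upperH → (F ∩ wedgeH u s ε).Nonempty) :
    ∃ u : EuclideanSpace ℝ (Fin 2), ‖u‖ = 1 ∧ 0 < u 1 ∧ Dense (Tu u '' F) := by
  set g : ℝ → EuclideanSpace ℝ (Fin 2) → ℝ := fun a x => x 0 - a * x 1
  obtain ⟨a, ha⟩ : {a | Dense (g a '' F)}.Nonempty :=
    (dense_setOf_dense_image (fun x => by fun_prop) (dense_setOf_mem_image_sub_mul hint)).nonempty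
  refine ⟨slopeDir a, norm_slopeDir a, slopeDir_apply_one_pos a, ?_⟩
  have hTu : Tu (slopeDir a) = (slopeDir a 1 * ·) ∘ g a := funext (Tu_slopeDir a)
  rw [hTu, image_comp]
  exact (Homeomorph.mulLeft₀ _ (slopeDir_apply_one_pos a).ne').isDenseEmbedding.dense_image.2 ha

theorem stmt10 (F : Set (EuclideanSpace ℝ (Fin 2))) (hF : F ⊆ upperH)
    (hint : ∀ (u : EuclideanSpace ℝ (Fin 2)) (s ε : ℝ), ‖u‖ = 1 → 0 < u 1 →
      0 < s → 0 < ε → wedgeH u s ε ⊆ upperH → (F ∩ wedgeH u s ε).Nonempty) :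
    ∃ u : EuclideanSpace ℝ (Fin 2), ‖u‖ = 1 ∧ 0 < u 1 ∧ Dense (Tu u '' F) :=
  stmt10_general F hint
end

section
/- Suppose F ⊆ ℍ intersects every wedge in ℍ, where ℍ = { (x,y) ∈ ℝ² : y > 0 } is the open upper half plane. Then the set of unit vectors u ∈ 𝕊⁺ = 𝕊 ∩ ℍ such that T_u(F) is dense in ℝ is comeager in 𝕊⁺. -/
/-!
A point `t • v` of `F` lying far out (`t` large) in a thin wedge around `u₀` can be moved to
any prescribed projection `c` by turning the direction only slightly: rotating `v` by the angle
`arcsin (c / t)` gives a unit vector `u` near `u₀` with `T_u (t • v) = c`. So for each `c` the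
directions `u` with `c ∈ T_u(F)` are dense in `𝕊⁺`. Since `T_u x` is continuous in `u`, for each
open `o ⊆ ℝ` the directions with `T_u(F) ∩ o ≠ ∅` form a dense open set, and intersecting over a
countable basis of `ℝ` gives a comeager set of directions with `T_u(F)` dense.
-/

open Filter Metric Set

/-- `𝕊⁺ = 𝕊 ∩ ℍ`, the upper half of the unit circle, as a subtype (with the subspace topology). -/
abbrev Splus : Type := {v : EuclideanSpace ℝ (Fin 2) // ‖v‖ = 1 ∧ 0 < v 1}

theorem residual_setOf_dense {X Y : Type*} [TopologicalSpace X] [TopologicalSpace Y]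
    [SecondCountableTopology Y] {g : X → Set Y}
    (h : ∀ o : Set Y, IsOpen o → o.Nonempty → {x | (o ∩ g x).Nonempty} ∈ residual X) :
    {x | Dense (g x)} ∈ residual X := by
  have hB := TopologicalSpace.isBasis_countableBasis Y
  have hdense : {x | Dense (g x)} =
      ⋂ o ∈ TopologicalSpace.countableBasis Y, {x | o.Nonempty → (o ∩ g x).Nonempty} := by
    ext x
    simp only [mem_ofPred_eq, mem_iInter, hB.dense_iff]
  rw [hdense, countable_bInter_mem (TopologicalSpace.countable_countableBasis Y)]
  intro o ho
  rcases o.eq_empty_or_nonempty with rfl | hne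
  · simp
  · filter_upwards [h o (hB.isOpen ho) hne] with x hx using fun _ ↦ hx

namespace EuclideanSpace

theorem norm_sq_eq_fin_two (x : EuclideanSpace ℝ (Fin 2)) : ‖x‖ ^ 2 = x 0 ^ 2 + x 1 ^ 2 := by
  simp [EuclideanSpace.real_norm_sq_eq, Fin.sum_univ_two]

theorem norm_eq_one_iff_fin_two {x : EuclideanSpace ℝ (Fin 2)} :
    ‖x‖ = 1 ↔ x 0 ^ 2 + x 1 ^ 2 = 1 := by
  rw [← norm_sq_eq_fin_two, pow_eq_one_iff_of_nonneg (norm_nonneg x) two_ne_zero]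

end EuclideanSpace

open EuclideanSpace

theorem Tu_smul_right (u x : EuclideanSpace ℝ (Fin 2)) (t : ℝ) : Tu u (t • x) = t * Tu u x := by
  simp only [Tu, PiLp.smul_apply, smul_eq_mul]
  ring

theorem continuous_Tu_left (x : EuclideanSpace ℝ (Fin 2)) : Continuous fun u ↦ Tu u x := by
  unfold Tu
  fun_prop

theorem pos_of_norm_sub_lt {u v : EuclideanSpace ℝ (Fin 2)} (h : ‖v - u‖ < u 1) : 0 < v 1 := by
  have := (abs_le.1 (Real.norm_eq_abs _ ▸ PiLp.norm_apply_le (v - u) 1)).1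
  rw [PiLp.sub_apply] at this
  linarith

theorem wedgeH_subset_upperH {u : EuclideanSpace ℝ (Fin 2)} {s ε : ℝ} (hs : 0 ≤ s)
    (hε : ε ≤ u 1) : wedgeH u s ε ⊆ upperH := by
  rintro _ ⟨t, v, hst, -, hvu, rfl⟩
  show 0 < t * v 1
  exact mul_pos (hs.trans_lt hst) (pos_of_norm_sub_lt (hvu.trans_le hε))

/-- Rotating the unit vector `v` by the angle `arcsin r` moves it by at most `2 |r|`. -/
theorem exists_norm_eq_one_Tu_eq {v : EuclideanSpace ℝ (Fin 2)} (hv : ‖v‖ = 1) {r : ℝ}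
    (hr : |r| ≤ 1) : ∃ u, ‖u‖ = 1 ∧ ‖u - v‖ ≤ 2 * |r| ∧ Tu u v = r := by
  rw [norm_eq_one_iff_fin_two] at hv
  have hr2 : r ^ 2 ≤ 1 := by nlinarith [sq_abs r, abs_nonneg r]
  set q := √(1 - r ^ 2) with hq
  have hq2 : q ^ 2 = 1 - r ^ 2 := Real.sq_sqrt (by linarith)
  have hq1 : q ≤ 1 := Real.sqrt_le_one.2 (by linarith [sq_nonneg r])
  have hq0 : 0 ≤ q := Real.sqrt_nonneg _
  refine ⟨!₂[q * v 0 - r * v 1, r * v 0 + q * v 1], ?_, ?_, ?_⟩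
  · rw [norm_eq_one_iff_fin_two]
    simp only [Fin.isValue, Matrix.cons_val_zero, Matrix.cons_val_one]
    linear_combination (q ^ 2 + r ^ 2) * hv + hq2
  · have hsq : ‖!₂[q * v 0 - r * v 1, r * v 0 + q * v 1] - v‖ ^ 2 ≤ (2 * |r|) ^ 2 := by
      rw [norm_sq_eq_fin_two]
      simp only [Fin.isValue, PiLp.sub_apply, Matrix.cons_val_zero,
        Matrix.cons_val_one]
      -- the left side is `2 - 2q`, and `q ≥ q ^ 2 = 1 - r ^ 2`
      nlinarith [sq_abs r]
    exact pow_le_pow_iff_left₀ (norm_nonneg _) (by positivity) two_ne_zero |>.1 hsq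
  · simp only [Tu, Fin.isValue, Matrix.cons_val_zero, Matrix.cons_val_one]
    linear_combination r * hv

theorem isOpen_setOf_inter_image_Tu_nonempty (F : Set (EuclideanSpace ℝ (Fin 2))) {o : Set ℝ}
    (ho : IsOpen o) : IsOpen {u : Splus | (o ∩ Tu u.1 '' F).Nonempty} := by
  have hunion : {u : Splus | (o ∩ Tu u.1 '' F).Nonempty} =
      ⋃ x ∈ F, (fun u : Splus ↦ Tu u.1 x) ⁻¹' o := by
    ext u
    simp [Set.Nonempty, and_comm]
  rw [hunion]
  exact isOpen_biUnion fun x _ ↦ ho.preimage ((continuous_Tu_left x).comp continuous_subtype_val)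

theorem dense_setOf_mem_image_Tu {F : Set (EuclideanSpace ℝ (Fin 2))}
    (hint : ∀ (u : EuclideanSpace ℝ (Fin 2)) (s ε : ℝ), ‖u‖ = 1 → 0 < u 1 →
      0 < s → 0 < ε → wedgeH u s ε ⊆ upperH → (F ∩ wedgeH u s ε).Nonempty) (c : ℝ) :
    Dense {u : Splus | c ∈ Tu u.1 '' F} := by
  rw [Metric.dense_iff]
  rintro ⟨u₀, hu₀, hu₀1⟩ δ hδ
  set ε := min δ (u₀ 1) / 2
  have hε : 0 < ε := half_pos (lt_min hδ hu₀1)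
  have h2ε : 2 * ε = min δ (u₀ 1) := mul_div_cancel₀ _ two_ne_zero
  set s := (|c| + 1) * (2 / ε + 1)
  have hs : |c| + 1 ≤ s :=
    le_mul_of_one_le_right (by positivity) (le_add_of_nonneg_left (by positivity))
  have hεs : 2 * |c| < ε * s := by
    have : ε * s = (|c| + 1) * (2 + ε) := by simp only [s]; field_simp
    nlinarith [abs_nonneg c]
  obtain ⟨x, hxF, t, v, hst, hv, hvu, rfl⟩ := hint u₀ s ε hu₀ hu₀1 (by positivity) hε
    (wedgeH_subset_upperH (by positivity) (by linarith [min_le_right δ (u₀ 1)]))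
  have ht : 0 < t := by linarith [abs_nonneg c]
  obtain ⟨u, hu, huv, hTu⟩ := exists_norm_eq_one_Tu_eq hv (r := c / t)
    (by rw [abs_div, abs_of_pos ht, div_le_one ht]; linarith)
  have huv' : ‖u - v‖ < ε := by
    rw [abs_div, abs_of_pos ht, ← mul_div_assoc, le_div_iff₀ ht] at huv
    nlinarith
  have huu₀ : ‖u - u₀‖ < min δ (u₀ 1) := calc
    ‖u - u₀‖ ≤ ‖u - v‖ + ‖v - u₀‖ := norm_sub_le_norm_sub_add_norm_sub _ _ _
    _ < 2 * ε := by linarith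
    _ = min δ (u₀ 1) := h2ε
  refine ⟨⟨u, hu, pos_of_norm_sub_lt (huu₀.trans_le (min_le_right _ _))⟩, ?_, t • v, hxF, ?_⟩
  · rw [mem_ball, Subtype.dist_eq, dist_eq_norm]
    exact huu₀.trans_le (min_le_left _ _)
  · rw [Tu_smul_right, hTu, mul_div_cancel₀ _ ht.ne']

theorem stmt11_general (F : Set (EuclideanSpace ℝ (Fin 2)))
    (hint : ∀ (u : EuclideanSpace ℝ (Fin 2)) (s ε : ℝ), ‖u‖ = 1 → 0 < u 1 →
      0 < s → 0 < ε → wedgeH u s ε ⊆ upperH → (F ∩ wedgeH u s ε).Nonempty) :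
    {u : Splus | Dense (Tu u.1 '' F)} ∈ residual Splus := by
  refine residual_setOf_dense fun o ho ⟨c, hc⟩ ↦ residual_of_dense_open ?_ ?_
  · exact isOpen_setOf_inter_image_Tu_nonempty F ho
  · exact (dense_setOf_mem_image_Tu hint c).mono fun u hu ↦ ⟨c, hc, hu⟩

theorem stmt11 (F : Set (EuclideanSpace ℝ (Fin 2))) (hF : F ⊆ upperH)
    (hint : ∀ (u : EuclideanSpace ℝ (Fin 2)) (s ε : ℝ), ‖u‖ = 1 → 0 < u 1 →
      0 < s → 0 < ε → wedgeH u s ε ⊆ upperH → (F ∩ wedgeH u s ε).Nonempty) :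
    {u : Splus | Dense (Tu u.1 '' F)} ∈ residual Splus :=
  stmt11_general F hint
end

section
/- Let E ⊆ ℝ. Then at least one of the following holds: (1) there is a unit vector u in ℝ² such that the restriction of the orthogonal projection T_u to E² is a quasi-isometric embedding of E² into ℝ; (2) there is a linear map S : ℝ⁴ → ℝ such that S(E⁴) is dense in ℝ. -/
open Filter Metric Set

/-!
If no projection `T_u` is a quasi-isometric embedding of `E²`, then, `T_u` being 1-Lipschitz, it is
the lower bound that fails for every `λ, δ`: in every direction `u` the difference set
`W = E² - E²` contains arbitrarily long vectors `w` with `|T_u w| ≤ ε ‖w‖`. Given `t ∈ ℝ` and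
`n₀ ∈ ℝ²`, take such a `w` for the direction orthogonal to `n₀`; a small move of `n₀` along `w`
gives `n` with `⟪n, w⟫ = t`. So every set `{n | t ∈ ⟪n, W⟫}` is dense, and Baire's theorem, applied
over a countable basis of `ℝ`, gives one `n` with `⟪n, W⟫` dense. Finally
`S v = n 0 * (v 0 - v 1) + n 1 * (v 2 - v 3)` maps `E⁴` onto a superset of `⟪n, W⟫`.
-/

open scoped Pointwise RealInnerProductSpace NNReal

theorem exists_denseRange_of_forall_dense_setOf_exists_eq {X Y ι : Type*} [TopologicalSpace X]
    [BaireSpace X] [Nonempty X] [TopologicalSpace Y] [SecondCountableTopology Y]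
    (f : ι → X → Y) (hf : ∀ i, Continuous (f i)) (h : ∀ y, Dense {x | ∃ i, f i x = y}) :
    ∃ x, DenseRange fun i => f i x := by
  obtain ⟨b, hb_count, hb_empty, hb⟩ := TopologicalSpace.exists_countable_basis Y
  let hits (V : Set Y) : Set X := ⋃ i, f i ⁻¹' V
  have hits_dense : ∀ V ∈ b, Dense (hits V) := fun V hV => by
    obtain ⟨y, hy⟩ := nonempty_iff_ne_empty.mpr (ne_of_mem_of_not_mem hV hb_empty)
    refine (h y).mono ?_
    rintro x ⟨i, rfl⟩
    exact mem_iUnion.mpr ⟨i, hy⟩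
  have hits_open : ∀ V ∈ b, IsOpen (hits V) := fun V hV =>
    isOpen_iUnion fun i => (hb.isOpen hV).preimage (hf i)
  obtain ⟨x, hx⟩ := (dense_biInter_of_isOpen hits_open hb_count hits_dense).nonempty
  refine ⟨x, hb.dense_iff.mpr fun V hV _ => ?_⟩
  obtain ⟨i, hi⟩ := mem_iUnion.mp (mem_iInter₂.mp hx V hV)
  exact ⟨f i x, hi, i, rfl⟩

theorem dense_setOf_exists_inner_eq {V : Type*} [NormedAddCommGroup V] [InnerProductSpace ℝ V]
    {W : Set V} (hW : ∀ (n : V) (R ε : ℝ), 0 < ε → ∃ w ∈ W, R < ‖w‖ ∧ |⟪n, w⟫| ≤ ε * ‖w‖)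
    (t : ℝ) : Dense {n : V | ∃ w ∈ W, ⟪n, w⟫ = t} := by
  refine Metric.dense_iff.mpr fun n₀ r hr => ?_
  obtain ⟨w, hwW, hwR, hw⟩ := hW n₀ (2 * |t| / r) (r / 2) (half_pos hr)
  have hw0 : 0 < ‖w‖ := (div_nonneg (by positivity) hr.le).trans_lt hwR
  set c := (t - ⟪n₀, w⟫) / ‖w‖ ^ 2
  refine ⟨n₀ + c • w, ?_, w, hwW, ?_⟩
  · have ht : |t| / ‖w‖ < r / 2 := by
      rw [div_lt_iff₀ hw0]; rw [div_lt_iff₀ hr] at hwR; linarith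
    rw [mem_ball, dist_eq_norm, add_sub_cancel_left, norm_smul, Real.norm_eq_abs, abs_div,
      abs_of_pos (by positivity : 0 < ‖w‖ ^ 2)]
    calc |t - ⟪n₀, w⟫| / ‖w‖ ^ 2 * ‖w‖ = |t - ⟪n₀, w⟫| / ‖w‖ := by field_simp
      _ ≤ |t| / ‖w‖ + |⟪n₀, w⟫| / ‖w‖ := by rw [← add_div]; gcongr; exact abs_sub _ _
      _ < r / 2 + r / 2 := add_lt_add_of_lt_of_le ht ((div_le_iff₀ hw0).mpr hw)
      _ = r := add_halves r
  · rw [inner_add_left, real_inner_smul_left, real_inner_self_eq_norm_sq,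
      div_mul_cancel₀ _ (by positivity), add_sub_cancel]

theorem IsQuasiIsometryOn.of_lipschitzWith {α β : Type*} [PseudoMetricSpace α]
    [PseudoMetricSpace β] {f : α → β} {X : Set α} {K : ℝ≥0} {lam δ : ℝ}
    (hf : LipschitzWith K f) (hK : K ≤ lam) (hδ : 0 < δ)
    (hlow : ∀ x ∈ X, ∀ x' ∈ X, lam⁻¹ * dist x x' - δ ≤ dist (f x) (f x')) :
    IsQuasiIsometryOn f X (f '' X) lam δ := by
  refine ⟨fun x hx => mem_image_of_mem f hx, fun x hx x' hx' => ⟨hlow x hx x' hx', ?_⟩, ?_⟩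
  · calc dist (f x) (f x') ≤ K * dist x x' := hf.dist_le_mul x x'
      _ ≤ lam * dist x x' + δ := by nlinarith [dist_nonneg (x := x) (y := x')]
  · rintro _ ⟨x, hx, rfl⟩
    exact ⟨x, hx, by rwa [dist_self]⟩

namespace Tu

theorem apply_sub (u x x' : EuclideanSpace ℝ (Fin 2)) : Tu u (x - x') = Tu u x - Tu u x' := by
  simp only [Tu, PiLp.sub_apply]; ring

theorem abs_le_norm {u : EuclideanSpace ℝ (Fin 2)} (hu : ‖u‖ = 1) (w : EuclideanSpace ℝ (Fin 2)) :
    |Tu u w| ≤ ‖w‖ := by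
  have hu2 : u 0 ^ 2 + u 1 ^ 2 = 1 := by
    simpa [Fin.sum_univ_two, hu] using (EuclideanSpace.norm_sq_eq u).symm
  have hw2 : ‖w‖ ^ 2 = w 0 ^ 2 + w 1 ^ 2 := by
    simp [EuclideanSpace.norm_sq_eq, Fin.sum_univ_two]
  -- Lagrange's identity: `Tu u w ^ 2 + ⟪u, w⟫ ^ 2 = ‖u‖ ^ 2 * ‖w‖ ^ 2`
  refine abs_le_of_sq_le_sq ?_ (norm_nonneg w)
  rw [hw2, Tu]
  nlinarith [sq_nonneg (w 0 * u 0 + w 1 * u 1)]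

theorem lipschitzWith {u : EuclideanSpace ℝ (Fin 2)} (hu : ‖u‖ = 1) : LipschitzWith 1 (Tu u) :=
  LipschitzWith.of_dist_le_mul fun x x' => by
    rw [Real.dist_eq, ← Tu.apply_sub, NNReal.coe_one, one_mul, dist_eq_norm]
    exact abs_le_norm hu _

theorem exists_inner_eq_norm_mul (n : EuclideanSpace ℝ (Fin 2)) :
    ∃ u, ‖u‖ = 1 ∧ ∀ w, ⟪n, w⟫ = ‖n‖ * Tu u w := by
  rcases eq_or_ne n 0 with rfl | hn
  · exact ⟨EuclideanSpace.single 0 1, by simp, fun w => by simp⟩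
  have hn0 : 0 < ‖n‖ := norm_pos_iff.mpr hn
  refine ⟨‖n‖⁻¹ • !₂[-n 1, n 0], ?_, fun w => ?_⟩
  · rw [norm_smul, norm_inv, norm_norm, inv_mul_eq_one₀ hn0.ne', EuclideanSpace.norm_eq,
      EuclideanSpace.norm_eq]
    simp [Fin.sum_univ_two, add_comm]
  · simp only [Tu, PiLp.inner_apply, Fin.sum_univ_two, PiLp.smul_apply, RCLike.inner_apply,
      Real.ringHom_apply, Matrix.cons_val_zero, Matrix.cons_val_one, Matrix.cons_val_fin_one,
      smul_eq_mul]
    field_simp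
    ring

end Tu

def cartesianPow (E : Set ℝ) (k : ℕ) : Set (EuclideanSpace ℝ (Fin k)) := {x | ∀ i, x i ∈ E}

theorem exists_mem_sub_lt_norm_abs_tu_le {X : Set (EuclideanSpace ℝ (Fin 2))}
    {u : EuclideanSpace ℝ (Fin 2)} (hu : ‖u‖ = 1)
    (hX : ∀ lam δ : ℝ, 0 < lam → 0 < δ → ¬IsQuasiIsometryOn (Tu u) X (Tu u '' X) lam δ)
    (R : ℝ) {ε : ℝ} (hε : 0 < ε) : ∃ w ∈ X - X, R < ‖w‖ ∧ |Tu u w| ≤ ε * ‖w‖ := by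
  by_contra! h
  set lam := max 1 ε⁻¹
  have hlam_inv : lam⁻¹ ≤ 1 ∧ lam⁻¹ ≤ ε :=
    ⟨inv_le_one_of_one_le₀ (le_max_left _ _), inv_le_of_inv_le₀ hε (le_max_right _ _)⟩
  refine hX lam (|R| + 1) (by positivity) (by positivity) <|
    .of_lipschitzWith (Tu.lipschitzWith hu) (by simp [lam]) (by positivity) fun x hx x' hx' => ?_
  rw [Real.dist_eq, ← Tu.apply_sub, dist_eq_norm]
  have hd := norm_nonneg (x - x')
  rcases le_or_gt ‖x - x'‖ R with hR | hR
  · linarith [abs_nonneg (Tu u (x - x')), le_abs_self R, mul_le_mul_of_nonneg_right hlam_inv.1 hd]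
  · linarith [h _ (sub_mem_sub hx hx') hR, abs_nonneg R, mul_le_mul_of_nonneg_right hlam_inv.2 hd]

theorem exists_mem_sub_lt_norm_abs_inner_le {X : Set (EuclideanSpace ℝ (Fin 2))}
    (hX : ∀ (u : EuclideanSpace ℝ (Fin 2)) (lam δ : ℝ), ‖u‖ = 1 → 0 < lam → 0 < δ →
      ¬IsQuasiIsometryOn (Tu u) X (Tu u '' X) lam δ)
    (n : EuclideanSpace ℝ (Fin 2)) (R : ℝ) {ε : ℝ} (hε : 0 < ε) :
    ∃ w ∈ X - X, R < ‖w‖ ∧ |⟪n, w⟫| ≤ ε * ‖w‖ := by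
  obtain ⟨u, hu, hnu⟩ := Tu.exists_inner_eq_norm_mul n
  obtain ⟨w, hw, hwR, hwu⟩ :=
    exists_mem_sub_lt_norm_abs_tu_le hu (hX u · · hu) R (ε := ε / (‖n‖ + 1)) (by positivity)
  refine ⟨w, hw, hwR, ?_⟩
  have hn : ‖n‖ * (ε / (‖n‖ + 1)) ≤ ε := by
    rw [mul_div_assoc', div_le_iff₀ (by positivity)]; nlinarith
  calc |⟪n, w⟫| = ‖n‖ * |Tu u w| := by rw [hnu, abs_mul, abs_norm]
    _ ≤ ‖n‖ * (ε / (‖n‖ + 1) * ‖w‖) := by gcongr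
    _ ≤ ε * ‖w‖ := by rw [← mul_assoc]; gcongr

theorem exists_linearMap_dense_image_cartesianPow_four (E : Set ℝ) (n : EuclideanSpace ℝ (Fin 2))
    (hn : DenseRange fun w : ↥(cartesianPow E 2 - cartesianPow E 2) =>
      ⟪n, (w : EuclideanSpace ℝ (Fin 2))⟫) :
    ∃ S : EuclideanSpace ℝ (Fin 4) →ₗ[ℝ] ℝ, Dense (S '' cartesianPow E 4) := by
  let P (i : Fin 4) := EuclideanSpace.proj (𝕜 := ℝ) i
  refine ⟨(n 0 • (P 0 - P 1) + n 1 • (P 2 - P 3) : EuclideanSpace ℝ (Fin 4) →L[ℝ] ℝ), hn.mono ?_⟩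
  rintro _ ⟨⟨_, x, hx, x', hx', rfl⟩, rfl⟩
  refine ⟨!₂[x 0, x' 0, x 1, x' 1], fun i => ?_, ?_⟩
  · fin_cases i <;> simp [hx _, hx' _]
  · simp [P, PiLp.inner_apply, Fin.sum_univ_two]
    ring

theorem stmt12 (E : Set ℝ) :
    (∃ (u : EuclideanSpace ℝ (Fin 2)) (lam δ : ℝ), ‖u‖ = 1 ∧ 0 < lam ∧ 0 < δ ∧
      IsQuasiIsometryOn (Tu u) {x : EuclideanSpace ℝ (Fin 2) | ∀ i, x i ∈ E}
        (Tu u '' {x : EuclideanSpace ℝ (Fin 2) | ∀ i, x i ∈ E}) lam δ) ∨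
    (∃ S : EuclideanSpace ℝ (Fin 4) →ₗ[ℝ] ℝ,
      Dense (⇑S '' {x : EuclideanSpace ℝ (Fin 4) | ∀ i, x i ∈ E})) := by
  refine or_iff_not_imp_left.mpr fun hE => ?_
  push Not at hE
  have hdense (t : ℝ) :
      Dense {n | ∃ w ∈ cartesianPow E 2 - cartesianPow E 2, ⟪n, w⟫ = t} :=
    dense_setOf_exists_inner_eq (exists_mem_sub_lt_norm_abs_inner_le hE) t
  obtain ⟨n, hn⟩ := exists_denseRange_of_forall_dense_setOf_exists_eq
    (fun (w : ↥(cartesianPow E 2 - cartesianPow E 2)) n => ⟪n, (w : EuclideanSpace ℝ (Fin 2))⟫)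
    (fun w => by fun_prop) fun t => by simpa only [Subtype.exists, exists_prop] using hdense t
  exact exists_linearMap_dense_image_cartesianPow_four E n hn
end
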